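/- The operator L_0 := Σ_{α=1}^{n} Σ_{p≥0} (p + 1/2 + μ_α)·T^{α,p}∘∂_{α,p} + (1/4)·Σ_{α=1}^{n}(1/4 − μ_α²)·Id equals V_0 as a linear operator on P. (This is the case j = 0 of the coincidence of the Virasoro operators of the Frobenius manifold of the Coxeter group D_n, expressed in the rescaled time variables, with the operators V_j obtained from vertex operators of the two-component BKP hierarchy.) -/

import Mathlib

/-!
Both sides are diagonal on monomials: each is a combination of the Euler operators
`t_k ∂/∂t_k`, `t̂_k ∂/∂t̂_k` (`k` odd) plus a multiple of the identity. In `V_0` the only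
products `:p_i p_{-i}:` that do not vanish are those with `i = ±k`, `k` odd, and each of them is
`2k · t_k ∂/∂t_k`. In `L_0` the rescaling constants cancel, `T^{α,p} ∘ ∂_{α,p} = t ∂/∂t`, and the
weight `p + 1/2 + μ_α` equals `k/(2n-2)` for the variable `t_k`, `k = (2n-2)p + 2α - 1`, of
`T^{α,p}` (and `k/2` for `t̂_k`, `k = 2p + 1`, when `α = n`). Division with remainder by `n - 1`
shows that `(α, p)` runs over the odd `k` exactly once, so the operator parts agree; the constants
agree by a sum-of-squares computation.
-/

open MvPolynomial

noncomputable section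

/-- The polynomial algebra over ℚ in variables `t_{2m+1}` (index `(false, m)`) and
`t̂_{2m+1}` (index `(true, m)`). -/
abbrev PP : Type := MvPolynomial (Bool × ℕ) ℚ

/-- The operator `p_k` (for `b = false`) resp. `p̂_k` (for `b = true`):
`2·∂/∂t_k` for odd positive `k`, multiplication by `(-k)·t_{-k}` for odd negative `k`,
and `0` for even `k`. -/
def pOp (b : Bool) (k : ℤ) : PP → PP := fun q =>
  if 0 < k ∧ Odd k then (2 : ℚ) • pderiv (b, (k.toNat - 1) / 2) q
  else if k < 0 ∧ Odd k then ((-k : ℤ) : ℚ) • (X (b, ((-k).toNat - 1) / 2) * q)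
  else 0

/-- The normal-ordered product `:p_a p_c:`, equal to `p_c ∘ p_a` if `a > 0 > c`
and `p_a ∘ p_c` otherwise. -/
def nord (b : Bool) (a c : ℤ) : PP → PP :=
  if 0 < a ∧ c < 0 then fun q => pOp b c (pOp b a q) else fun q => pOp b a (pOp b c q)

/-- The Virasoro operator
`V_j = (1/(8n-8))·Σ_{i∈ℤ} :p_i p_{(2n-2)j-i}: + (1/8)·Σ_{i∈ℤ} :p̂_i p̂_{2j-i}:
+ δ_{j,0}·(n/24)·(1 + 1/(2n-2))·Id`, acting pointwise (on each polynomial only finitely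
many summands act nontrivially). -/
def Vop (n : ℕ) (j : ℤ) : PP → PP := fun q =>
  (8 * (n : ℚ) - 8)⁻¹ • (∑ᶠ i : ℤ, nord false i ((2 * (n : ℤ) - 2) * j - i) q)
  + (8 : ℚ)⁻¹ • (∑ᶠ i : ℤ, nord true i (2 * j - i) q)
  + (if j = 0 then (n : ℚ) / 24 * (1 + (2 * (n : ℚ) - 2)⁻¹) else 0) • q

/-- For `α ∈ {1,…,n}`, the spectrum `μ_α = (2α-n)/(2n-2)` for `α ≤ n-1` and `μ_n = 0`. -/
def mu (n α : ℕ) : ℚ :=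
  if α = n then 0 else (2 * (α : ℚ) - n) / (2 * (n : ℚ) - 2)

/-- The rescaling constants: `c_{α,p} = (2n-2)·∏_{r=0}^{p}((2α-1)/(2n-2)+r)` for
`α ≤ n-1` and `c_{n,p} = 2·∏_{r=0}^{p}(1/2+r)`. -/
def cc (n α p : ℕ) : ℚ :=
  if α = n then 2 * ∏ r ∈ Finset.range (p + 1), ((1 : ℚ) / 2 + r)
  else (2 * (n : ℚ) - 2) * ∏ r ∈ Finset.range (p + 1), ((2 * (α : ℚ) - 1) / (2 * (n : ℚ) - 2) + r)

/-- The variable corresponding to the time `T^{α,p}`: the variable `t_{(2n-2)p+2α-1}`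
(index `(false, (n-1)p+α-1)`) if `α ≤ n-1`, and `t̂_{2p+1}` (index `(true, p)`) if `α = n`. -/
def vIdx (n α p : ℕ) : Bool × ℕ :=
  if α = n then (true, p) else (false, (n - 1) * p + α - 1)

/-- The operator `T^{α,p}`: multiplication by the rescaled time variable `c_{α,p}·t`. -/
def Tmul (n α p : ℕ) : PP → PP := fun q => cc n α p • (X (vIdx n α p) * q)

/-- The operator `∂_{α,p} = c_{α,p}⁻¹·∂/∂t`, the derivative in the rescaled time variable. -/
def Dop (n α p : ℕ) : PP → PP := fun q => (cc n α p)⁻¹ • pderiv (vIdx n α p) q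

/-- The flat metric: `η_{αβ} = 1/(4n-4)` if `α+β = n`, `η_{nn} = 1/4`, and `0` otherwise. -/
def eta (n α β : ℕ) : ℚ :=
  if α + β = n then (4 * (n : ℚ) - 4)⁻¹ else if α = n ∧ β = n then (4 : ℚ)⁻¹ else 0

/-- The inverse metric: `η^{αβ} = 4n-4` if `α+β = n`, `η^{nn} = 4`, and `0` otherwise. -/
def etaInv (n α β : ℕ) : ℚ :=
  if α + β = n then 4 * (n : ℚ) - 4 else if α = n ∧ β = n then 4 else 0

open Function Finset

theorem finsum_int_eq_finsum_odd_add_finsum_neg_odd {M : Type*} [AddCommMonoid M] {f : ℤ → M}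
    (hodd : ∀ i, ¬ Odd i → f i = 0)
    (hpos : HasFiniteSupport fun m : ℕ => f (2 * m + 1))
    (hneg : HasFiniteSupport fun m : ℕ => f (-(2 * m + 1))) :
    ∑ᶠ i, f i = ∑ᶠ m : ℕ, f (2 * m + 1) + ∑ᶠ m : ℕ, f (-(2 * m + 1)) := by
  have finite_inter {g : ℕ → ℤ} (hg : HasFiniteSupport (f ∘ g)) :
      (Set.range g ∩ support f).Finite :=
    (hg.image g).subset fun _ ⟨⟨m, hm⟩, hf⟩ => ⟨m, by subst hm; exact hf, hm⟩
  have hpos_inj : Injective fun m : ℕ => (2 * m + 1 : ℤ) := fun a b h => by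
    simp only at h; omega
  have hneg_inj : Injective fun m : ℕ => (-(2 * m + 1) : ℤ) := fun a b h => by
    simp only at h; omega
  rw [← finsum_mem_range hpos_inj, ← finsum_mem_range hneg_inj,
    ← finsum_mem_union' ?disjoint (finite_inter hpos) (finite_inter hneg), ← finsum_mem_univ]
  case disjoint =>
    exact Set.disjoint_left.2 fun _ ⟨a, ha⟩ ⟨b, hb⟩ => by simp only at ha hb; omega
  refine finsum_mem_inter_support_eq' _ _ _ fun i hi => ?_
  obtain ⟨j, rfl⟩ : Odd i := not_imp_comm.1 (hodd i) hi
  simp only [Set.mem_univ, Set.mem_union, Set.mem_range, true_iff]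
  rcases le_or_gt 0 j with hj | hj
  · exact Or.inl ⟨j.toNat, by omega⟩
  · exact Or.inr ⟨(-j - 1).toNat, by omega⟩

theorem finsum_eq_sum_range_finsum_mul_add {M : Type*} [AddCommMonoid M] {k : ℕ} (hk : k ≠ 0)
    {f : ℕ → M} (hf : HasFiniteSupport f) :
    ∑ᶠ m, f m = ∑ r ∈ range k, ∑ᶠ p, f (k * p + r) := by
  have : NeZero k := ⟨hk⟩
  let e : Fin k × ℕ ≃ ℕ := (Equiv.prodComm _ _).trans (Nat.divModEquiv k).symm
  rw [← finsum_comp_equiv e, finsum_curry (fun x => f (e x)) (hf.comp_of_injective e.injective),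
    finsum_eq_sum_of_fintype, ← Fin.sum_univ_eq_sum_range]
  simp [e, mul_comm]

theorem sum_Icc_one_eq_sum_Icc_pred_add {M : Type*} [AddCommMonoid M] {n : ℕ} (hn : 1 ≤ n)
    (f : ℕ → M) : ∑ α ∈ Icc 1 n, f α = ∑ α ∈ Icc 1 (n - 1), f α + f n := by
  conv_lhs => rw [← Nat.sub_add_cancel hn]
  rw [Finset.sum_Icc_succ_top (by omega), Nat.sub_add_cancel hn]

theorem sum_Icc_two_mul_sub_sq (c : ℚ) (k : ℕ) :
    ∑ α ∈ Icc 1 k, (2 * (α : ℚ) - c) ^ 2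
      = 2 * k * (k + 1) * (2 * k + 1) / 3 - 2 * c * k * (k + 1) + k * c ^ 2 := by
  induction k with
  | zero => simp
  | succ k ih =>
    rw [Finset.sum_Icc_succ_top (by omega), ih]
    push_cast
    ring

def eulerTerm (v : Bool × ℕ) (q : PP) : PP := X v * pderiv v q

theorem hasFiniteSupport_eulerTerm (q : PP) : HasFiniteSupport fun v => eulerTerm v q :=
  q.vars.finite_toSet.subset fun v hv => by
    by_contra h
    exact hv (by simp [eulerTerm, pderiv_eq_zero_of_notMem_vars h])

theorem hasFiniteSupport_smul_eulerTerm (c : ℕ → ℚ) (b : Bool) (q : PP) :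
    HasFiniteSupport fun m => c m • eulerTerm (b, m) q :=
  HasFiniteSupport.smul_right c
    ((hasFiniteSupport_eulerTerm q).comp_of_injective (g := Prod.mk b) (Prod.mk_right_injective b))

theorem pOp_of_not_odd (b : Bool) {k : ℤ} (hk : ¬ Odd k) (q : PP) : pOp b k q = 0 := by
  simp [pOp, hk]

theorem pOp_two_mul_add_one (b : Bool) (m : ℕ) (q : PP) :
    pOp b (2 * m + 1) q = (2 : ℚ) • pderiv (b, m) q := by
  rw [pOp, if_pos ⟨by omega, ⟨m, rfl⟩⟩]
  congr
  omega

theorem pOp_neg_two_mul_add_one (b : Bool) (m : ℕ) (q : PP) :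
    pOp b (-(2 * m + 1)) q = (2 * m + 1 : ℚ) • (X (b, m) * q) := by
  rw [pOp, if_neg (by omega), if_pos ⟨by omega, ⟨-(m + 1), by ring⟩⟩]
  congr 1
  · push_cast; ring
  · congr 3; omega

theorem nord_neg_self_of_not_odd (b : Bool) {i : ℤ} (hi : ¬ Odd i) (q : PP) :
    nord b i (-i) q = 0 := by
  have hi' : ¬ Odd (-i) := by rwa [odd_neg]
  unfold nord
  split_ifs <;> simp [pOp_of_not_odd b hi, pOp_of_not_odd b hi']

theorem nord_two_mul_add_one (b : Bool) (m : ℕ) (q : PP) :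
    nord b (2 * m + 1) (-(2 * m + 1)) q = (2 * (2 * m + 1) : ℚ) • eulerTerm (b, m) q := by
  rw [nord, if_pos (by omega), pOp_two_mul_add_one, pOp_neg_two_mul_add_one, eulerTerm,
    mul_smul_comm, smul_smul]
  ring_nf

theorem nord_neg_two_mul_add_one (b : Bool) (m : ℕ) (q : PP) :
    nord b (-(2 * m + 1)) (2 * m + 1) q = (2 * (2 * m + 1) : ℚ) • eulerTerm (b, m) q := by
  rw [nord, if_neg (by omega), pOp_two_mul_add_one, pOp_neg_two_mul_add_one, eulerTerm,
    mul_smul_comm, smul_smul]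
  ring_nf

theorem finsum_nord_neg_self (b : Bool) (q : PP) :
    ∑ᶠ i : ℤ, nord b i (-i) q = ∑ᶠ m : ℕ, (4 * (2 * m + 1) : ℚ) • eulerTerm (b, m) q := by
  have hfin := hasFiniteSupport_smul_eulerTerm (fun m => 2 * (2 * m + 1)) b q
  rw [finsum_int_eq_finsum_odd_add_finsum_neg_odd (fun _ hi => nord_neg_self_of_not_odd b hi q)
    ?pos ?neg]
  case pos | neg => simpa only [neg_neg, nord_two_mul_add_one, nord_neg_two_mul_add_one] using hfin
  simp only [neg_neg, nord_two_mul_add_one, nord_neg_two_mul_add_one]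
  rw [← finsum_add_distrib hfin hfin]
  exact finsum_congr fun m => by rw [← add_smul]; ring_nf

theorem Vop_zero_apply (n : ℕ) (q : PP) :
    Vop n 0 q = ∑ᶠ m : ℕ, ((2 * m + 1) / (2 * n - 2) : ℚ) • eulerTerm (false, m) q
      + ∑ᶠ m : ℕ, ((m : ℚ) + 1 / 2) • eulerTerm (true, m) q
      + ((n : ℚ) / 24 * (1 + (2 * (n : ℚ) - 2)⁻¹)) • q := by
  simp only [Vop, mul_zero, zero_sub, if_true, finsum_nord_neg_self, smul_finsum, smul_smul]
  congr 3 <;> funext m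
  · rw [show (8 * n - 8 : ℚ) = 4 * (2 * n - 2) by ring, mul_inv]; ring_nf
  · ring_nf

theorem cc_pos {n α : ℕ} (hn : 2 ≤ n) (hα : 1 ≤ α) (p : ℕ) : 0 < cc n α p := by
  have hn' : (0 : ℚ) < 2 * n - 2 := by
    have : (2 : ℚ) ≤ n := by exact_mod_cast hn
    linarith
  have hα' : (0 : ℚ) < (2 * α - 1) / (2 * n - 2) := by
    have : (1 : ℚ) ≤ α := by exact_mod_cast hα
    exact div_pos (by linarith) hn'
  unfold cc
  split_ifs
  · positivity
  · exact mul_pos hn' (prod_pos fun r _ => add_pos_of_pos_of_nonneg hα' r.cast_nonneg)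

theorem Tmul_Dop {n α p : ℕ} (hc : cc n α p ≠ 0) (q : PP) :
    Tmul n α p (Dop n α p q) = eulerTerm (vIdx n α p) q := by
  rw [Tmul, Dop, mul_smul_comm, smul_smul, mul_inv_cancel₀ hc, one_smul, eulerTerm]

theorem finsum_smul_Tmul_Dop_self {n : ℕ} (hn : 2 ≤ n) (q : PP) :
    ∑ᶠ p : ℕ, ((p : ℚ) + 1 / 2 + mu n n) • Tmul n n p (Dop n n p q)
      = ∑ᶠ m : ℕ, ((m : ℚ) + 1 / 2) • eulerTerm (true, m) q :=
  finsum_congr fun p => by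
    rw [Tmul_Dop (cc_pos hn (by omega) p).ne', mu, vIdx, if_pos rfl, if_pos rfl, add_zero]

theorem smul_Tmul_Dop_of_succ_lt {n r : ℕ} (hr : r + 1 < n) (p : ℕ) (q : PP) :
    ((p : ℚ) + 1 / 2 + mu n (r + 1)) • Tmul n (r + 1) p (Dop n (r + 1) p q)
      = ((2 * (((n - 1) * p + r : ℕ) : ℚ) + 1) / (2 * n - 2)) •
          eulerTerm (false, (n - 1) * p + r) q := by
  have hn : (n - 1 : ℚ) ≠ 0 := by
    have : (r : ℚ) + 2 ≤ n := by exact_mod_cast hr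
    linarith
  rw [Tmul_Dop (cc_pos (by omega) (by omega) p).ne', mu, vIdx, if_neg (by omega),
    if_neg (by omega), Nat.add_succ_sub_one]
  congr 1
  push_cast [Nat.cast_sub (by omega : 1 ≤ n)]
  field_simp
  ring

theorem sum_Icc_finsum_smul_Tmul_Dop {n : ℕ} (hn : 2 ≤ n) (q : PP) :
    ∑ α ∈ Icc 1 (n - 1), ∑ᶠ p : ℕ, ((p : ℚ) + 1 / 2 + mu n α) • Tmul n α p (Dop n α p q)
      = ∑ᶠ m : ℕ, ((2 * m + 1) / (2 * n - 2) : ℚ) • eulerTerm (false, m) q := by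
  rw [finsum_eq_sum_range_finsum_mul_add (k := n - 1) (by omega)
      (hasFiniteSupport_smul_eulerTerm _ false q),
    ← Ico_add_one_right_eq_Icc, sum_Ico_eq_sum_range, Nat.add_sub_cancel]
  refine sum_congr rfl fun r hr => finsum_congr fun p => ?_
  rw [add_comm 1 r, smul_Tmul_Dop_of_succ_lt (by have := mem_range.1 hr; omega)]

theorem quarter_mul_sum_quarter_sub_mu_sq {n : ℕ} (hn : 2 ≤ n) :
    (1 / 4 : ℚ) * ∑ α ∈ Icc 1 n, ((1 : ℚ) / 4 - mu n α ^ 2)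
      = (n : ℚ) / 24 * (1 + (2 * (n : ℚ) - 2)⁻¹) := by
  have hmu : ∀ α ∈ Icc 1 (n - 1), mu n α ^ 2 = (2 * (α : ℚ) - n) ^ 2 / (2 * n - 2) ^ 2 :=
    fun α hα => by rw [mu, if_neg (by have := (mem_Icc.1 hα).2; omega), div_pow]
  have hn' : (n - 1 : ℚ) ≠ 0 := by
    have : (2 : ℚ) ≤ n := by exact_mod_cast hn
    linarith
  rw [sum_Icc_one_eq_sum_Icc_pred_add (by omega), sum_sub_distrib, sum_const, sum_congr rfl hmu,
    ← sum_div, sum_Icc_two_mul_sub_sq, Nat.card_Icc, mu, if_pos rfl, nsmul_eq_mul,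
    Nat.add_sub_cancel, Nat.cast_sub (by omega)]
  field_simp
  ring

/-- the Virasoro operator
`L_0 = Σ_α Σ_{p≥0} (p+1/2+μ_α)·T^{α,p}∘∂_{α,p} + (1/4)·Σ_α (1/4-μ_α²)·Id`
of the Frobenius manifold of the Coxeter group `D_n` equals `V_0`. -/
theorem L_zero_eq_V_zero (n : ℕ) (hn : 3 ≤ n) (q : PP) :
    (∑ α ∈ Finset.Icc 1 n, ∑ᶠ p : ℕ,
        ((p : ℚ) + 1 / 2 + mu n α) • Tmul n α p (Dop n α p q))
      + ((1 / 4 : ℚ) * ∑ α ∈ Finset.Icc 1 n, ((1 : ℚ) / 4 - mu n α ^ 2)) • q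
      = Vop n 0 q := by
  rw [sum_Icc_one_eq_sum_Icc_pred_add (by omega), sum_Icc_finsum_smul_Tmul_Dop (by omega),
    finsum_smul_Tmul_Dop_self (by omega), quarter_mul_sum_quarter_sub_mu_sq (by omega),
    Vop_zero_apply]

end
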